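/- Let G be a connected graph and S a simultaneous dominating set in G. Then S can be extended to a vertex cover C of G with |C| ≤ 2|S| − 1. -/

import Mathlib

open SimpleGraph

variable {V : Type*}

/-- Number of connected components of a graph. -/
noncomputable def numComponents (G : SimpleGraph V) : ℕ := Nat.card G.ConnectedComponent

/-- A vertex is a cut vertex if its removal increases the number of connected components. -/
def IsCutVertex (G : SimpleGraph V) (v : V) : Prop :=
  numComponents G < numComponents (G.induce {u | u ≠ v})

/-- `T` is a spanning tree of `G`: a subgraph on all vertices of `G` that is a tree. -/
def IsSpanningTree (G T : SimpleGraph V) : Prop := T ≤ G ∧ T.IsTree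

/-- `v` is dominated by `S` in the graph `T`. -/
def DominatedIn (T : SimpleGraph V) (S : Set V) (v : V) : Prop :=
  v ∈ S ∨ ∃ u ∈ S, T.Adj v u

/-- `v` is simultaneously dominated by `S`: dominated in every spanning tree of `G`. -/
def SimDominated (G : SimpleGraph V) (S : Set V) (v : V) : Prop :=
  ∀ T : SimpleGraph V, IsSpanningTree G T → DominatedIn T S v

/-- `S` is a simultaneous dominating set of `G`. -/
def IsSDSet (G : SimpleGraph V) (S : Set V) : Prop := ∀ v, SimDominated G S v

/-- `C` is a vertex cover of `G`. -/
def IsVertexCover (G : SimpleGraph V) (C : Set V) : Prop :=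
  ∀ ⦃u v : V⦄, G.Adj u v → u ∈ C ∨ v ∈ C

/-- A block of `G`: a maximal vertex set inducing a connected subgraph without cut vertices. -/
def IsBlock (G : SimpleGraph V) (B : Set V) : Prop :=
  B.Nonempty ∧ (G.induce B).Connected ∧ (∀ x, ¬ IsCutVertex (G.induce B) x) ∧
    ∀ B' : Set V, B ⊆ B' → (G.induce B').Connected →
      (∀ x, ¬ IsCutVertex (G.induce B') x) → B' = B

/-- 2-connected: connected, at least 3 vertices, no cut vertex. -/
def TwoConnected (G : SimpleGraph V) [Fintype V] : Prop :=
  G.Connected ∧ 3 ≤ Fintype.card V ∧ ∀ v, ¬ IsCutVertex G v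

/-- Colours 1, 0, 0̂. -/
inductive Col : Type
  | one | zero | zhat
deriving DecidableEq

/-- `S` is an `f`-respecting simultaneous dominating set of `G`. -/
def RespSDS (G : SimpleGraph V) (f : V → Col) (S : Set V) : Prop :=
  (∀ v, f v = Col.one → v ∈ S) ∧ ∀ v, f v = Col.zhat → SimDominated G S v

/-- A minimum `f`-respecting simultaneous dominating set. -/
def MinRespSDS (G : SimpleGraph V) (f : V → Col) (S : Set V) : Prop :=
  RespSDS G f S ∧ ∀ S' : Set V, RespSDS G f S' → S.ncard ≤ S'.ncard

/-!
Choose a spanning tree `T` of `G` that contains a spanning forest of `G - S`, and root it at any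
vertex `r`. Every vertex outside `S` is joined in `T` to `S`, which uses up `|Sᶜ|` edges of `T`
meeting `S`; hence at most `|S| - 1` edges of `T` avoid `S`. Let `X` be the vertices whose edge
towards `r` avoids `S`; these edges are distinct, so `|X| ≤ |S| - 1`. An edge `xy` of `G - S`
joins the ends of a path of `T` avoiding `S`. Along a path in a tree the distance to `r` has no
interior local maximum, so the path leaves `x` or `y` towards `r`, putting `x` or `y` in `X`.
Thus `S ∪ X` is a vertex cover with at most `2|S| - 1` vertices.
-/

namespace SimpleGraph

variable {G T H : SimpleGraph V}

lemma spanningCoe_induce_adj {s : Set V} {u v : V} :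
    (G.induce s).spanningCoe.Adj u v ↔ G.Adj u v ∧ u ∈ s ∧ v ∈ s := by
  simp only [map_adj, comap_adj, Function.Embedding.coe_subtype]
  constructor
  · rintro ⟨u, v, h, rfl, rfl⟩
    exact ⟨h, u.2, v.2⟩
  · rintro ⟨h, hu, hv⟩
    exact ⟨⟨u, hu⟩, ⟨v, hv⟩, h, rfl, rfl⟩

lemma IsTree.eq_of_adj_of_dist_lt (hT : T.IsTree) (r : V) {w a b : V} (ha : T.Adj w a)
    (hb : T.Adj w b) (har : T.dist r a < T.dist r w) (hbr : T.dist r b < T.dist r w) :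
    a = b := by
  have geodesic_through : ∀ c, T.Adj w c → T.dist r c < T.dist r w →
      ∃ p : T.Path r w, (p : T.Walk r w).penultimate = c := by
    intro c hc hcr
    obtain ⟨p, -, hp⟩ := hT.connected.exists_path_of_dist r c
    have hlen : (p.concat hc.symm).length = T.dist r w := by
      have := hT.dist_eq_dist_add_one_of_adj r hc
      rw [Walk.length_concat]
      omega
    exact ⟨⟨_, (p.concat hc.symm).isPath_of_length_eq_dist hlen⟩, p.penultimate_concat _⟩
  obtain ⟨p, rfl⟩ := geodesic_through a ha har
  obtain ⟨q, rfl⟩ := geodesic_through b hb hbr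
  rw [(hT.isAcyclic.subsingleton_path r w).elim p q]

lemma IsTree.exists_adj_dist_lt_of_isPath (hT : T.IsTree) (hHT : H ≤ T) (r : V) {x y : V}
    (P : H.Walk x y) (hP : P.IsPath) (hxy : x ≠ y) :
    (∃ v ∈ P.support, H.Adj x v ∧ T.dist r v < T.dist r x) ∨
      ∃ v ∈ P.support, H.Adj y v ∧ T.dist r v < T.dist r y := by
  induction P with
  | nil => exact absurd rfl hxy
  | @cons x w y hxw Q ih =>
    rw [Walk.cons_isPath_iff] at hP
    rcases hT.dist_eq_dist_add_one_of_adj r (hHT hxw) with hd | hd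
    · exact .inl ⟨w, by simp, hxw, by omega⟩
    by_cases hwy : w = y
    · subst hwy
      exact .inr ⟨x, by simp, hxw.symm, by omega⟩
    rcases ih hP.1 hwy with ⟨v, hvQ, hwv, hv⟩ | ⟨v, hvQ, hyv, hv⟩
    · have hvx := hT.eq_of_adj_of_dist_lt r (hHT hwv) (hHT hxw.symm) hv (by omega)
      exact absurd (hvx ▸ hvQ) hP.2
    · exact .inr ⟨v, by simp [hvQ], hyv, hv⟩

lemma ncard_le_ncard_edgeSet_of_exists_adj_lt [Finite V] (φ : V → ℕ) {X : Set V}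
    (h : ∀ x ∈ X, ∃ v, G.Adj x v ∧ φ v < φ x) : X.ncard ≤ G.edgeSet.ncard := by
  choose! f hfG hfφ using h
  have hinj : Set.InjOn (fun x ↦ s(x, f x)) X := by
    intro x hx y hy hxy
    rcases Sym2.eq_iff.mp hxy with ⟨hxy, -⟩ | ⟨hxfy, hfxy⟩
    · exact hxy
    · have hx_lt := hfφ x hx
      have hy_lt := hfφ y hy
      rw [hfxy] at hx_lt
      rw [← hxfy] at hy_lt
      omega
  calc X.ncard = ((fun x ↦ s(x, f x)) '' X).ncard := hinj.ncard_image.symm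
    _ ≤ G.edgeSet.ncard := Set.ncard_le_ncard (by rintro _ ⟨x, hx, rfl⟩; exact hfG x hx)

lemma IsTree.ncard_edgeSet_add_one [Finite V] (hT : T.IsTree) :
    T.edgeSet.ncard + 1 = Nat.card V := by
  have := Fintype.ofFinite V
  classical
  rw [Nat.card_eq_fintype_card, ← hT.card_edgeFinset, ← coe_edgeFinset, Set.ncard_coe_finset]

lemma ncard_edgeSet_sdiff_add_ncard_edgeSet [Finite V] (hHT : H ≤ T) :
    (T \ H).edgeSet.ncard + H.edgeSet.ncard = T.edgeSet.ncard := by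
  rw [edgeSet_sdiff, Set.ncard_sdiff_add_ncard_of_subset (edgeSet_mono hHT)]

lemma Connected.exists_isTree_le_induce_reachable (hG : G.Connected) (s : Set V) :
    ∃ T ≤ G, T.IsTree ∧
      ∀ ⦃x y⦄, (G.induce s).spanningCoe.Adj x y → (T.induce s).spanningCoe.Reachable x y := by
  obtain ⟨F, hF, hFac, hFreach⟩ := (G.induce s).spanningCoe.exists_isAcyclic_reachable_eq_le
  obtain ⟨T, hFT, hTG, hT⟩ :=
    hG.exists_isTree_le_of_le_of_isAcyclic (hF.trans (G.spanningCoe_induce_le s)) hFac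
  refine ⟨T, hTG, hT, fun x y hxy ↦ ?_⟩
  have hFle : F ≤ (T.induce s).spanningCoe := fun u v huv ↦ by
    obtain ⟨-, hu, hv⟩ := spanningCoe_induce_adj.mp (hF huv)
    exact spanningCoe_induce_adj.mpr ⟨hFT huv, hu, hv⟩
  exact (hFreach ▸ hxy.reachable).mono hFle

end SimpleGraph

lemma IsSDSet.ncard_compl_le_ncard_edgeSet_sdiff [Finite V] {G T : SimpleGraph V} {S : Set V}
    (hS : IsSDSet G S) (hT : IsSpanningTree G T) :
    Sᶜ.ncard ≤ (T \ (T.induce Sᶜ).spanningCoe).edgeSet.ncard := by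
  classical
  refine ncard_le_ncard_edgeSet_of_exists_adj_lt (fun v ↦ if v ∈ S then 0 else 1) fun x hx ↦ ?_
  obtain ⟨s, hs, hxs⟩ := (hS x T hT).resolve_left hx
  refine ⟨s, ⟨hxs, fun h ↦ (spanningCoe_induce_adj.mp h).2.2 hs⟩, ?_⟩
  simp [hs, Set.notMem_of_mem_compl hx]

/-- Any SD-set `S` of a connected graph extends to a vertex cover `C` with
`|C| ≤ 2|S| - 1`. -/
theorem stmt5 [Fintype V] (G : SimpleGraph V) (hG : G.Connected) (S : Set V)
    (hS : IsSDSet G S) :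
    ∃ C : Set V, S ⊆ C ∧ _root_.IsVertexCover G C ∧ C.ncard ≤ 2 * S.ncard - 1 := by
  classical
  obtain ⟨T, hTG, hT, hreach⟩ := hG.exists_isTree_le_induce_reachable Sᶜ
  obtain ⟨r⟩ := hG.nonempty
  set H := (T.induce Sᶜ).spanningCoe
  set X := {x | ∃ v, H.Adj x v ∧ T.dist r v < T.dist r x}
  refine ⟨S ∪ X, Set.subset_union_left, fun x y hxy ↦ ?_, ?_⟩
  · by_cases hx : x ∈ S
    · exact .inl (.inl hx)
    by_cases hy : y ∈ S
    · exact .inr (.inl hy)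
    obtain ⟨P⟩ := hreach (spanningCoe_induce_adj.mpr ⟨hxy, hx, hy⟩)
    rcases hT.exists_adj_dist_lt_of_isPath (T.spanningCoe_induce_le Sᶜ) r P.toPath P.toPath.2
      hxy.ne with ⟨v, -, hv⟩ | ⟨v, -, hv⟩
    exacts [.inl (.inr ⟨v, hv⟩), .inr (.inr ⟨v, hv⟩)]
  · have hX : X.ncard ≤ H.edgeSet.ncard :=
      ncard_le_ncard_edgeSet_of_exists_adj_lt (T.dist r) fun _ hx ↦ hx
    have hSc : Sᶜ.ncard ≤ (T \ H).edgeSet.ncard :=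
      hS.ncard_compl_le_ncard_edgeSet_sdiff ⟨hTG, hT⟩
    have hT_edges : (T \ H).edgeSet.ncard + H.edgeSet.ncard = T.edgeSet.ncard :=
      ncard_edgeSet_sdiff_add_ncard_edgeSet (T.spanningCoe_induce_le Sᶜ)
    have hT_card := hT.ncard_edgeSet_add_one
    have hS_card := Set.ncard_add_ncard_compl S
    have hC_card := Set.ncard_union_le S X
    omega
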